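/- Let H be a normal subgroup of a regular Hausdorff abelian paratopological group G such that H is locally compact in the group reflexion G♭. Then the quotient paratopological group G/H is regular. -/

import Mathlib

/-!
Regularity of `G ⧸ H` reduces to finding, for every neighbourhood `U` of `1`, a neighbourhood
`V` of `1` with `closure (V * H) ⊆ U * H`. Local compactness of `H` in `G♭` provides a
`♭`-compact `K ⊆ H` and a `♭`-neighbourhood `O` of `1` with `O ∩ H ⊆ K`. For `V` small enough,
the `H`-components of points of `V * H` close to a given point differ by elements of
`O ∩ H ⊆ K`, whence `closure (V * H) ⊆ closure (V * K) * H`. As `G♭` is a group topology and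
`K` is `♭`-compact, `closure (V * K) ⊆ closure♭ V * K`. Finally, since `G` is abelian, `W * W⁻¹`
is a `♭`-neighbourhood of `1` for every neighbourhood `W` of `1`, so `closure♭ V ⊆ closure (V * W)`,
and this lies in a closed neighbourhood `C ⊆ U` given by the regularity of `G`.
-/

open Topology Filter Set Pointwise

/-- The group reflexion topology `τ♭`: the strongest group topology on `G` weaker than `τ`. -/
def flatTop (G : Type*) [Group G] (τ : TopologicalSpace G) : TopologicalSpace G :=
  sInf {t : TopologicalSpace G | τ ≤ t ∧ @IsTopologicalGroup G t _}

theorem exists_isCompact_subset_inter_subset {X : Type*} [TopologicalSpace X] {S : Set X}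
    [WeaklyLocallyCompactSpace S] {x : X} (hx : x ∈ S) :
    ∃ K ⊆ S, IsCompact K ∧ ∃ O ∈ 𝓝 x, O ∩ S ⊆ K := by
  obtain ⟨K, hK, hKx⟩ := exists_compact_mem_nhds (⟨x, hx⟩ : S)
  obtain ⟨O, hO, hOK⟩ := (mem_nhds_subtype S _ K).1 hKx
  exact ⟨(↑) '' K, Subtype.coe_image_subset S K, hK.image continuous_subtype_val, O, hO,
    fun y hy => ⟨⟨y, hy.2⟩, hOK hy.1, rfl⟩⟩

theorem closure_mul_subset_of_isCompact {G : Type*} [Group G] [TopologicalSpace G]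
    [IsTopologicalGroup G] (s : Set G) {K : Set G} (hK : IsCompact K) :
    closure (s * K) ⊆ closure s * K :=
  closure_minimal (mul_subset_mul_right subset_closure)
    (isClosed_closure.mul_right_of_isCompact hK)

theorem QuotientGroup.regularSpace_of_closure_mul_subgroup_subset {G : Type*} [Group G]
    [TopologicalSpace G] [ContinuousMul G] (H : Subgroup G)
    (h : ∀ U ∈ 𝓝 (1 : G), ∃ V ∈ 𝓝 (1 : G), closure (V * (H : Set G)) ⊆ U * H) :
    RegularSpace (G ⧸ H) := by
  refine .of_exists_mem_nhds_isClosed_subset fun q s hs => ?_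
  obtain ⟨x, rfl⟩ := QuotientGroup.mk_surjective q
  have hU : (x * ·) ⁻¹' ((↑) ⁻¹' s) ∈ 𝓝 (1 : G) :=
    (continuous_const_mul x).tendsto' 1 x (mul_one x)
      (QuotientGroup.continuous_mk.continuousAt.preimage_mem_nhds hs)
  obtain ⟨V, hV, hVU⟩ := h _ hU
  have hxV : x • V ∈ 𝓝 x := by simpa using smul_mem_nhds_smul x hV
  refine ⟨closure ((↑) '' (x • V)),
    mem_of_superset (QuotientGroup.isOpenMap_coe.image_mem_nhds hxV) subset_closure,
    isClosed_closure, ?_⟩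
  rw [← QuotientGroup.mk_surjective.preimage_subset_preimage_iff,
    QuotientGroup.isOpenMap_coe.preimage_closure_eq_closure_preimage QuotientGroup.continuous_mk,
    QuotientGroup.preimage_image_mk_eq_mul, smul_mul_assoc, closure_smul]
  rintro _ ⟨_, hy, rfl⟩
  obtain ⟨u, hu, k, hk, rfl⟩ := hVU hy
  show ((x * (u * k) : G) : G ⧸ H) ∈ s
  rwa [← mul_assoc, QuotientGroup.mk_mul_of_mem _ hk]

section Paratopological

variable {G : Type*} [CommGroup G] [TopologicalSpace G] [ContinuousMul G]

theorem closure_mul_subgroup_subset (H : Subgroup G) {B K V : Set G} (hB : B ∈ 𝓝 (1 : G))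
    (hVB : V ⊆ B) (hK : B * B * (B * B)⁻¹ ∩ (H : Set G) ⊆ K) :
    closure (V * (H : Set G)) ⊆ closure (V * K) * (H : Set G) := by
  have translate : ∀ (y : G) {N : Set G}, N ∈ 𝓝 (1 : G) → (y * ·) '' N ∈ 𝓝 y := fun y N hN => by
    simpa using (isOpenMap_mul_left y).image_mem_nhds hN
  intro x hx
  obtain ⟨_, ⟨b₀, hb₀, rfl⟩, v₀, hv₀, h₀, hh₀, hxb₀⟩ :=
    mem_closure_iff_nhds.1 hx _ (translate x hB)
  refine ⟨x * h₀⁻¹, mem_closure_iff_nhds.2 fun t ht => ?_, h₀, hh₀, inv_mul_cancel_right x h₀⟩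
  have hN : B ∩ (x * h₀⁻¹ * ·) ⁻¹' t ∈ 𝓝 (1 : G) :=
    inter_mem hB ((continuous_const_mul _).tendsto' 1 _ (mul_one _) ht)
  obtain ⟨_, ⟨n, ⟨hnB, hnt⟩, rfl⟩, v, hv, h, hh, hxn⟩ :=
    mem_closure_iff_nhds.1 hx _ (translate x hN)
  beta_reduce at hxb₀ hxn
  have hdiff : h * h₀⁻¹ = v₀ * n * (v * b₀)⁻¹ := by
    rw [← div_eq_mul_inv, ← div_eq_mul_inv, div_eq_div_iff_mul_eq_mul]
    calc h * (v * b₀) = v * h * b₀ := by rw [mul_left_comm, mul_assoc]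
      _ = x * b₀ * n := by rw [hxn, mul_right_comm]
      _ = v₀ * n * h₀ := by rw [← hxb₀, mul_right_comm]
  have hk : h * h₀⁻¹ ∈ K := hK ⟨hdiff ▸ mul_mem_mul (mul_mem_mul (hVB hv₀) hnB)
    (inv_mem_inv.2 (mul_mem_mul (hVB hv) hb₀)), mul_mem hh (inv_mem hh₀)⟩
  exact ⟨x * h₀⁻¹ * n, hnt, v, hv, _, hk,
    show v * _ = _ by rw [← mul_assoc, hxn, mul_right_comm]⟩

end Paratopological

theorem le_flatTop {G : Type*} [Group G] (τ : TopologicalSpace G) : τ ≤ flatTop G τ :=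
  le_sInf fun _ ht => ht.1

theorem isTopologicalGroup_flatTop {G : Type*} [Group G] (τ : TopologicalSpace G) :
    @IsTopologicalGroup G (flatTop G τ) _ :=
  topologicalGroup_sInf fun _ ht => ht.2

theorem exists_mul_inv_subset_of_mem_nhds_flatTop {G : Type*} [Group G] [τ : TopologicalSpace G]
    {P : Set G} (hP : P ∈ @nhds G (flatTop G τ) 1) : ∃ W ∈ 𝓝 (1 : G), W * W⁻¹ ⊆ P := by
  let _ := flatTop G τ
  have := isTopologicalGroup_flatTop τ
  obtain ⟨W, hW, hWP⟩ := exists_nhds_split_inv hP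
  refine ⟨W, nhds_mono (le_flatTop τ) hW, ?_⟩
  rintro _ ⟨a, ha, b, hb, rfl⟩
  simpa [div_eq_mul_inv] using hWP a ha b⁻¹ hb

section FlatTop

variable {G : Type*} [CommGroup G] [τ : TopologicalSpace G] [ContinuousMul G]

-- In fact the sets `W * W⁻¹` form a base at `1` of `G♭`; commutativity makes them a group
-- filter basis.
variable (G) in
abbrev mulInvNhdsBasis : GroupFilterBasis G :=
  groupFilterBasisOfComm {s | ∃ W ∈ 𝓝 (1 : G), W * W⁻¹ = s} ⟨_, univ, univ_mem, rfl⟩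
    (by
      rintro _ _ ⟨W₁, h₁, rfl⟩ ⟨W₂, h₂, rfl⟩
      exact ⟨_, ⟨W₁ ∩ W₂, inter_mem h₁ h₂, rfl⟩,
        subset_inter (mul_subset_mul inter_subset_left (inv_subset_inv.2 inter_subset_left))
          (mul_subset_mul inter_subset_right (inv_subset_inv.2 inter_subset_right))⟩)
    (by
      rintro _ ⟨W, hW, rfl⟩
      simpa using mul_mem_mul (mem_of_mem_nhds hW) (inv_mem_inv.2 (mem_of_mem_nhds hW)))
    (by
      rintro _ ⟨W, hW, rfl⟩
      obtain ⟨V, hVo, hV1, hVW⟩ := exists_open_nhds_one_mul_subset hW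
      refine ⟨V * V⁻¹, ⟨V, hVo.mem_nhds hV1, rfl⟩, ?_⟩
      rw [mul_mul_mul_comm, ← mul_inv]
      exact mul_subset_mul hVW (inv_subset_inv.2 hVW))
    (by
      rintro _ ⟨W, hW, rfl⟩
      refine ⟨W * W⁻¹, ⟨W, hW, rfl⟩, ?_⟩
      change _ ⊆ (W * W⁻¹)⁻¹
      rw [mul_inv_rev, inv_inv, mul_comm])

theorem le_mulInvNhdsBasis_topology : τ ≤ (mulInvNhdsBasis G).topology := by
  refine le_of_nhds_le_nhds fun x => ?_
  rw [((mulInvNhdsBasis G).nhds_hasBasis x).ge_iff]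
  rintro _ ⟨W, hW, rfl⟩
  have hW1 : (1 : G) ∈ W⁻¹ := by simpa using mem_of_mem_nhds hW
  exact mem_of_superset (by simpa using (isOpenMap_mul_left x).image_mem_nhds hW)
    (image_mono (subset_mul_left W hW1))

theorem flatTop_le_mulInvNhdsBasis_topology : flatTop G τ ≤ (mulInvNhdsBasis G).topology :=
  sInf_le ⟨le_mulInvNhdsBasis_topology, (mulInvNhdsBasis G).isTopologicalGroup⟩

theorem closure_flatTop_subset_closure_mul (V : Set G) {W : Set G} (hW : W ∈ 𝓝 (1 : G)) :
    closure[flatTop G τ] V ⊆ closure (V * W) := by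
  intro x hx
  have hx' := (@mem_closure_iff_nhds_basis G (mulInvNhdsBasis G).topology _ _ _ _ _
    ((mulInvNhdsBasis G).nhds_hasBasis x)).1
    (closure.mono flatTop_le_mulInvNhdsBasis_topology hx)
  refine mem_closure_iff_nhds.2 fun t ht => ?_
  have hN : W ∩ (x * ·) ⁻¹' t ∈ 𝓝 (1 : G) :=
    inter_mem hW ((continuous_const_mul x).tendsto' 1 x (mul_one x) ht)
  obtain ⟨_, hyV, _, ⟨n₁, hn₁, n₂, hn₂, rfl⟩, rfl⟩ := hx' _ ⟨_, hN, rfl⟩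
  exact ⟨x * n₁, hn₁.2, _, hyV, n₂⁻¹, hn₂.1, by group⟩

end FlatTop

theorem exists_closure_mul_subgroup_subset {G : Type*} [CommGroup G] [τ : TopologicalSpace G]
    [ContinuousMul G] [RegularSpace G] (H : Subgroup G) {K O : Set G} (hKH : K ⊆ H)
    (hK : @IsCompact G (flatTop G τ) K) (hO : O ∈ @nhds G (flatTop G τ) 1)
    (hOK : O ∩ H ⊆ K) {U : Set G} (hU : U ∈ 𝓝 (1 : G)) :
    ∃ V ∈ 𝓝 (1 : G), closure (V * (H : Set G)) ⊆ U * H := by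
  obtain ⟨A, hA, hAO⟩ := exists_mul_inv_subset_of_mem_nhds_flatTop hO
  obtain ⟨B, hBo, hB1, hBA⟩ := exists_open_nhds_one_mul_subset hA
  obtain ⟨C, hC, hCc, hCU⟩ := exists_mem_nhds_isClosed_subset hU
  obtain ⟨W, hWo, hW1, hWC⟩ := exists_open_nhds_one_mul_subset hC
  have hB := hBo.mem_nhds hB1
  have hW := hWo.mem_nhds hW1
  refine ⟨W ∩ B, inter_mem hW hB, ?_⟩
  have hBBK : B * B * (B * B)⁻¹ ∩ H ⊆ K := fun g hg =>
    hOK ⟨hAO (mul_subset_mul hBA (inv_subset_inv.2 hBA) hg.1), hg.2⟩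
  have hWWC : closure ((W ∩ B) * W) ⊆ C :=
    closure_minimal ((mul_subset_mul_right inter_subset_left).trans hWC) hCc
  calc closure ((W ∩ B) * (H : Set G))
      ⊆ closure ((W ∩ B) * K) * H := closure_mul_subgroup_subset H hB inter_subset_right hBBK
    _ ⊆ closure[flatTop G τ] ((W ∩ B) * K) * H :=
        mul_subset_mul_right (closure.mono (le_flatTop τ))
    _ ⊆ closure[flatTop G τ] (W ∩ B) * K * H := mul_subset_mul_right
        (@closure_mul_subset_of_isCompact G _ (flatTop G τ) (isTopologicalGroup_flatTop τ) _ _ hK)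
    _ ⊆ U * K * H := mul_subset_mul_right (mul_subset_mul_right
        ((closure_flatTop_subset_closure_mul _ hW).trans (hWWC.trans hCU)))
    _ ⊆ U * H := by
        rw [mul_assoc]
        exact mul_subset_mul_left ((mul_subset_mul_right hKH).trans (coe_mul_coe H).subset)

theorem stmt_15_general {G : Type*} [CommGroup G] [τ : TopologicalSpace G] [ContinuousMul G]
    [RegularSpace G] (H : Subgroup G)
    (hlc : @LocallyCompactSpace H
      (TopologicalSpace.induced (Subtype.val : H → G) (flatTop G τ))) :
    RegularSpace (G ⧸ H) := by
  obtain ⟨K, hKH, hK, O, hO, hOK⟩ :=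
    @exists_isCompact_subset_inter_subset G (flatTop G τ) H _ 1 H.one_mem
  exact QuotientGroup.regularSpace_of_closure_mul_subgroup_subset H fun _ hU =>
    exists_closure_mul_subgroup_subset H hKH hK hO hOK hU

/-- Let `H` be a normal subgroup of a regular Hausdorff abelian paratopological group `G`
such that `H` is locally compact in the group reflexion `G♭`.  Then the quotient
paratopological group `G/H` is regular. -/
theorem stmt_15 {G : Type*} [CommGroup G] [τ : TopologicalSpace G] [ContinuousMul G]
    [T2Space G] [RegularSpace G] (H : Subgroup G) [H.Normal]
    (hlc : @LocallyCompactSpace H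
      (TopologicalSpace.induced (Subtype.val : H → G) (flatTop G τ))) :
    RegularSpace (G ⧸ H) :=
  stmt_15_general (τ := τ) H hlc
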